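/- In the braid group B_{m+n+k}, the elements Ш̄_{m,n} (lifts of the longest shuffle permutations) satisfy Ш̄_{n+k,m} · (Ш̄_{k,n})^{↑m} = Ш̄_{k,m+n} · Ш̄_{n,m}. -/

import Mathlib

/-! The braid group `B_∞` (inductive limit of the Artin braid groups), its integral
group ring, the shift endomorphism `↑m`, and the braid shuffle elements `Ш_{m,n}`.
The generator `br i` represents the Artin generator `σ_{i+1}`. -/

/-- Relators of the Artin presentation of `B_∞`. -/
def braidRels : Set (FreeGroup ℕ) :=
  {r | (∃ i : ℕ, r = .of i * .of (i + 1) * .of i * (.of (i + 1) * .of i * .of (i + 1))⁻¹) ∨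
       (∃ i j : ℕ, i + 2 ≤ j ∧ r = .of i * .of j * (.of j * .of i)⁻¹)}

/-- The braid group `B_∞`. -/
abbrev BraidInf : Type := PresentedGroup braidRels

/-- The Artin generator `σ_{i+1}` of `B_∞`. -/
def br (i : ℕ) : BraidInf := PresentedGroup.of i

lemma braidRels_mk_eq_one {r : FreeGroup ℕ} (h : r ∈ braidRels) :
    PresentedGroup.mk braidRels r = 1 :=
  (QuotientGroup.eq_one_iff r).mpr (Subgroup.subset_normalClosure h)

lemma br_braid (i : ℕ) : br i * br (i + 1) * br i = br (i + 1) * br i * br (i + 1) := by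
  have h := braidRels_mk_eq_one (Or.inl ⟨i, rfl⟩)
  rw [map_mul, map_mul, map_inv, map_mul, map_mul, mul_inv_eq_one] at h
  exact h

lemma br_comm {i j : ℕ} (hij : i + 2 ≤ j) : br i * br j = br j * br i := by
  have h := braidRels_mk_eq_one (Or.inr ⟨i, j, hij, rfl⟩)
  rw [map_mul, map_inv, map_mul, mul_inv_eq_one] at h
  exact h

/-- The shift endomorphism of `B_∞`, sending `σ_i` to `σ_{i+m}`. -/
noncomputable def braidShift (m : ℕ) : BraidInf →* BraidInf :=
  PresentedGroup.toGroup (f := fun i => br (i + m)) (by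
    rintro r (⟨i, rfl⟩ | ⟨i, j, hij, rfl⟩) <;>
      simp only [map_mul, map_inv, FreeGroup.lift_apply_of, mul_inv_eq_one]
    · rw [show i + 1 + m = i + m + 1 from by omega]
      exact br_braid (i + m)
    · exact br_comm (by omega))

/-- The ascending run `σ_{a+1} σ_{a+2} ⋯ σ_{a+k+1}` (1-based):
`br a * br (a+1) * ⋯ * br (a+k)`. -/
def ascFrom : ℕ → ℕ → BraidInf
  | a, 0 => br a
  | a, k + 1 => ascFrom a k * br (a + k + 1)

/-- The descending run `σ_{a+1} σ_a ⋯ σ_{a-k+1}` (1-based):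
`br a * br (a-1) * ⋯ * br (a-k)`. -/
def descFrom : ℕ → ℕ → BraidInf
  | a, 0 => br a
  | a, k + 1 => descFrom a k * br (a - (k + 1))


/-- The lift `Ш̄_{m,n} ∈ B_∞` of the longest `(m,n)`-shuffle permutation:
`Ш̄_{m,n} = (σ_m σ_{m+1} ⋯ σ_{m+n-1})(σ_{m-1} ⋯ σ_{m+n-2}) ⋯ (σ_1 σ_2 ⋯ σ_n)`,
with `Ш̄_{m,0} = Ш̄_{0,n} = 1`. -/
def barSha : ℕ → ℕ → BraidInf
  | 0, _ => 1
  | _ + 1, 0 => 1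
  | m + 1, n + 1 => ((List.range (m + 1)).map fun t => ascFrom (m - t) n).prod


lemma braidShift_br (m i : ℕ) : braidShift m (br i) = br (i + m) := by
  simp [braidShift, br, PresentedGroup.toGroup.of]

lemma barSha_zero_left (n : ℕ) : barSha 0 n = 1 := rfl

lemma barSha_zero_right (n : ℕ) : barSha n 0 = 1 := by
  cases n <;> rfl

lemma ascFrom_cons (a len : ℕ) : ascFrom a (len + 1) = br a * ascFrom (a + 1) len := by
  induction len with
  | zero => simp [ascFrom]
  | succ l ih =>
    show ascFrom a (l + 1) * br (a + (l + 1) + 1) =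
      br a * (ascFrom (a + 1) l * br (a + 1 + l + 1))
    rw [ih, show a + 1 + l + 1 = a + (l + 1) + 1 from by omega, mul_assoc]

lemma descFrom_cons (a k : ℕ) : descFrom a (k + 1) = br a * descFrom (a - 1) k := by
  induction k with
  | zero => simp [descFrom]
  | succ l ih =>
    show descFrom a (l + 1) * br (a - (l + 1 + 1)) =
      br a * (descFrom (a - 1) l * br (a - 1 - (l + 1)))
    rw [ih, show a - 1 - (l + 1) = a - (l + 1 + 1) from by omega, mul_assoc]

lemma barSha_succ (k n : ℕ) : barSha (k + 1) (n + 1) = ascFrom k n * barSha k (n + 1) := by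
  cases k with
  | zero =>
    show ((List.range 1).map fun t => ascFrom (0 - t) n).prod = ascFrom 0 n * 1
    simp
  | succ k =>
    show ((List.range (k + 1 + 1)).map fun t => ascFrom (k + 1 - t) n).prod = _
    rw [List.range_succ_eq_map, List.map_cons, List.prod_cons, List.map_map, Nat.sub_zero]
    congr 1
    have he : ((fun t => ascFrom (k + 1 - t) n) ∘ Nat.succ) = fun t => ascFrom (k - t) n := by
      funext t
      simp [Nat.succ_sub_succ]
    rw [he]
    rfl

lemma br_ascFrom_comm_high {a len j : ℕ} (h : a + len + 2 ≤ j) :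
    br j * ascFrom a len = ascFrom a len * br j := by
  induction len with
  | zero => exact (br_comm (by omega)).symm
  | succ l ih =>
    show br j * (ascFrom a l * br (a + l + 1)) = ascFrom a l * br (a + l + 1) * br j
    rw [← mul_assoc, ih (by omega), mul_assoc,
      (br_comm (show a + l + 1 + 2 ≤ j by omega)).symm, mul_assoc]

lemma br_ascFrom_comm_low {a len j : ℕ} (h : j + 2 ≤ a) :
    br j * ascFrom a len = ascFrom a len * br j := by
  induction len with
  | zero => exact br_comm (by omega)
  | succ l ih =>
    show br j * (ascFrom a l * br (a + l + 1)) = ascFrom a l * br (a + l + 1) * br j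
    rw [← mul_assoc, ih, mul_assoc, br_comm (show j + 2 ≤ a + l + 1 by omega), mul_assoc]

lemma br_ascFrom_slide {a len j : ℕ} (h1 : a ≤ j) (h2 : j + 1 ≤ a + len) :
    br (j + 1) * ascFrom a len = ascFrom a len * br j := by
  induction len generalizing a j with
  | zero => omega
  | succ l ih =>
    rw [ascFrom_cons]
    rcases Nat.lt_or_ge a j with hlt | hge
    · calc br (j + 1) * (br a * ascFrom (a + 1) l)
          = br a * (br (j + 1) * ascFrom (a + 1) l) := by
            rw [← mul_assoc, ← br_comm (show a + 2 ≤ j + 1 by omega), mul_assoc]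
        _ = br a * (ascFrom (a + 1) l * br j) := by rw [ih (by omega) (by omega)]
        _ = br a * ascFrom (a + 1) l * br j := by rw [mul_assoc]
    · have haj : a = j := le_antisymm h1 hge
      subst haj
      cases l with
      | zero =>
        show br (a + 1) * (br a * br (a + 1)) = br a * br (a + 1) * br a
        rw [← mul_assoc]
        exact (br_braid a).symm
      | succ l' =>
        rw [ascFrom_cons]
        calc br (a + 1) * (br a * (br (a + 1) * ascFrom (a + 2) l'))
            = (br (a + 1) * br a * br (a + 1)) * ascFrom (a + 2) l' := by group
          _ = (br a * br (a + 1) * br a) * ascFrom (a + 2) l' := by rw [← br_braid a]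
          _ = br a * br (a + 1) * (br a * ascFrom (a + 2) l') := by group
          _ = br a * br (a + 1) * (ascFrom (a + 2) l' * br a) := by
              rw [br_ascFrom_comm_low (show a + 2 ≤ a + 2 from le_refl _)]
          _ = br a * (br (a + 1) * ascFrom (a + 2) l') * br a := by group

lemma br_barSha_comm_high {a b j : ℕ} (h : a + b ≤ j) :
    br j * barSha a b = barSha a b * br j := by
  induction a with
  | zero => rw [barSha_zero_left, mul_one, one_mul]
  | succ a ih =>
    cases b with
    | zero => rw [barSha_zero_right, mul_one, one_mul]
    | succ b' =>
      rw [barSha_succ, ← mul_assoc, br_ascFrom_comm_high (show a + b' + 2 ≤ j by omega),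
        mul_assoc, ih (by omega), ← mul_assoc]

lemma key_slide {k N i : ℕ} (h : i + 2 ≤ N) :
    br (i + k) * barSha k N = barSha k N * br i := by
  induction k with
  | zero => simp [barSha_zero_left]
  | succ k ih =>
    obtain ⟨n, rfl⟩ : ∃ n, N = n + 1 := ⟨N - 1, by omega⟩
    rw [barSha_succ, ← mul_assoc, show i + (k + 1) = (i + k) + 1 from by omega,
      br_ascFrom_slide (show k ≤ i + k by omega) (show (i + k) + 1 ≤ k + n by omega),
      mul_assoc, ih, ← mul_assoc]

lemma braidShift_ascFrom (m a len : ℕ) :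
    braidShift m (ascFrom a len) = ascFrom (a + m) len := by
  induction len with
  | zero => exact braidShift_br m a
  | succ l ih =>
    show braidShift m (ascFrom a l * br (a + l + 1)) = ascFrom (a + m) l * br (a + m + l + 1)
    rw [map_mul, ih, braidShift_br, show a + l + 1 + m = a + m + l + 1 from by omega]

lemma braidShift_descFrom {m a l : ℕ} (h : l ≤ a) :
    braidShift m (descFrom a l) = descFrom (a + m) l := by
  induction l with
  | zero => exact braidShift_br m a
  | succ l ih =>
    show braidShift m (descFrom a l * br (a - (l + 1))) =
      descFrom (a + m) l * br (a + m - (l + 1))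
    rw [map_mul, ih (by omega), braidShift_br,
      show a - (l + 1) + m = a + m - (l + 1) from by omega]

lemma barSha_one_right (a : ℕ) : barSha (a + 1) 1 = descFrom a a := by
  induction a with
  | zero =>
    show ((List.range 1).map fun t => ascFrom (0 - t) 0).prod = br 0
    simp [ascFrom]
  | succ a ih =>
    rw [barSha_succ, ih, descFrom_cons, Nat.add_sub_cancel]
    rfl

lemma barSha_col (k N : ℕ) :
    barSha (k + 1) (N + 1) = barSha (k + 1) N * descFrom (k + N) k := by
  induction k generalizing N with
  | zero =>
    cases N with
    | zero =>
      show ((List.range 1).map fun t => ascFrom (0 - t) 0).prod = barSha 1 0 * descFrom 0 0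
      show _ = 1 * descFrom 0 0
      simp [ascFrom, descFrom]
    | succ N' =>
      simp only [Nat.zero_add]
      rw [barSha_succ, barSha_succ]
      simp only [barSha_zero_left, mul_one]
      rw [
        show ascFrom 0 (N' + 1) = ascFrom 0 N' * br (0 + N' + 1) from rfl,
        show (0 : ℕ) + N' + 1 = N' + 1 from by omega]
      rfl
  | succ k ih =>
    cases N with
    | zero =>
      rw [barSha_zero_right, one_mul]
      exact barSha_one_right (k + 1)
    | succ N' =>
      rw [barSha_succ (k + 1) (N' + 1), ih (N' + 1), barSha_succ (k + 1) N',
        show ascFrom (k + 1) (N' + 1) = ascFrom (k + 1) N' * br (k + 1 + N' + 1) from rfl,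
        show k + 1 + N' + 1 = k + N' + 2 from by omega,
        show k + 1 + (N' + 1) = k + N' + 2 from by omega,
        show k + (N' + 1) = k + N' + 1 from by omega,
        descFrom_cons (k + N' + 2) k,
        show k + N' + 2 - 1 = k + N' + 1 from by omega]
      calc ascFrom (k + 1) N' * br (k + N' + 2) * (barSha (k + 1) (N' + 1) * descFrom (k + N' + 1) k)
          = ascFrom (k + 1) N' * ((br (k + N' + 2) * barSha (k + 1) (N' + 1)) * descFrom (k + N' + 1) k) := by
            group
        _ = ascFrom (k + 1) N' * ((barSha (k + 1) (N' + 1) * br (k + N' + 2)) * descFrom (k + N' + 1) k) := by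
            rw [br_barSha_comm_high (show (k + 1) + (N' + 1) ≤ k + N' + 2 from by omega)]
        _ = ascFrom (k + 1) N' * barSha (k + 1) (N' + 1) * (br (k + N' + 2) * descFrom (k + N' + 1) k) := by
            group

lemma barSha_row (n k m : ℕ) :
    barSha (n + k) m = braidShift k (barSha n m) * barSha k m := by
  induction n with
  | zero => rw [barSha_zero_left, map_one, one_mul, Nat.zero_add]
  | succ n ih =>
    cases m with
    | zero => rw [barSha_zero_right, barSha_zero_right, barSha_zero_right, map_one, one_mul]
    | succ m' =>
      rw [show n + 1 + k = (n + k) + 1 from by omega, barSha_succ, ih,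
        barSha_succ n m', map_mul, braidShift_ascFrom, mul_assoc]

lemma barSha_colsplit (k m n : ℕ) :
    barSha k (m + n) = barSha k m * braidShift m (barSha k n) := by
  induction n with
  | zero => rw [barSha_zero_right, map_one, mul_one, Nat.add_zero]
  | succ n ih =>
    cases k with
    | zero => simp [barSha_zero_left]
    | succ k' =>
      rw [show m + (n + 1) = (m + n) + 1 from rfl, barSha_col k' (m + n), ih,
        barSha_col k' n, map_mul, braidShift_descFrom (show k' ≤ k' + n from by omega),
        show k' + n + m = k' + (m + n) from by omega, mul_assoc]

lemma asc_key {k N a len : ℕ} (h : a + len + 2 ≤ N) :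
    ascFrom (a + k) len * barSha k N = barSha k N * ascFrom a len := by
  induction len with
  | zero => exact key_slide (by omega)
  | succ l ih =>
    show ascFrom (a + k) l * br (a + k + l + 1) * barSha k N =
      barSha k N * (ascFrom a l * br (a + l + 1))
    rw [mul_assoc, show a + k + l + 1 = (a + l + 1) + k from by omega,
      key_slide (show (a + l + 1) + 2 ≤ N from by omega), ← mul_assoc, ih (by omega),
      mul_assoc]

lemma sha_key {k N n m : ℕ} (h : n + m ≤ N) :
    braidShift k (barSha n m) * barSha k N = barSha k N * barSha n m := by
  induction n with
  | zero => rw [barSha_zero_left, map_one, one_mul, mul_one]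
  | succ n ih =>
    cases m with
    | zero => rw [barSha_zero_right, map_one, one_mul, mul_one]
    | succ m' =>
      rw [barSha_succ n m', map_mul, braidShift_ascFrom, mul_assoc, ih (by omega),
        ← mul_assoc, asc_key (show n + m' + 2 ≤ N from by omega), mul_assoc]

/-- `Ш̄_{n+k,m} · (Ш̄_{k,n})^{↑m} = Ш̄_{k,m+n} · Ш̄_{n,m}` in the braid
group (all factors lie in `B_{m+n+k}`). -/
theorem stmt_10 (m n k : ℕ) :
    barSha (n + k) m * braidShift m (barSha k n) = barSha k (m + n) * barSha n m := by
  rw [barSha_row n k m, mul_assoc, ← barSha_colsplit,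
    sha_key (show n + m ≤ m + n from by omega)]
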